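/- Let u = u(t,x) be a smooth solution of the Novikov equation u_t + u²u_x + ∂ₓP₁ + P₂ = 0 on an open set of (t,x), with u(t,·) ∈ H¹(ℝ) ∩ W^{1,4}(ℝ) for each t. Then the balance law ∂_t(u_x⁴) + ∂_x(u² u_x⁴) = 4u³u_x³ − 4u_x³(P₁ + ∂ₓP₂) holds pointwise. -/

import Mathlib

open MeasureTheory Set
open scoped Topology

noncomputable section

/-- The kernel `p(x) = (1/2) e^{-|x|}`. -/
def pker (x : ℝ) : ℝ := (1/2) * Real.exp (-|x|)

/-- The (a.e.) derivative of the kernel `p`. -/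
def pker' (x : ℝ) : ℝ := -(1/2) * Real.sign x * Real.exp (-|x|)

lemma pker_cont : Continuous pker := by
  unfold pker; fun_prop

lemma measurable_realSign : Measurable Real.sign := by
  unfold Real.sign
  refine Measurable.ite ?_ measurable_const (Measurable.ite ?_ measurable_const measurable_const)
  · exact measurableSet_lt measurable_id measurable_const
  · exact measurableSet_lt measurable_const measurable_id

lemma pker'_meas : Measurable pker' := by
  unfold pker'
  exact (measurable_const.mul measurable_realSign).mul (by fun_prop)

lemma pker_le (x : ℝ) : |pker x| ≤ 1/2 := by
  rw [pker, abs_of_nonneg (by positivity)]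
  nlinarith [Real.exp_le_one_iff.2 (neg_nonpos.2 (abs_nonneg x))]

lemma pker_eq_left {z y : ℝ} (h : y ≤ z) : pker (z - y) = (1/2) * Real.exp (y - z) := by
  rw [pker, abs_of_nonneg (by linarith), neg_sub]

lemma pker_eq_right {z y : ℝ} (h : z ≤ y) : pker (z - y) = (1/2) * Real.exp (z - y) := by
  rw [pker, abs_of_nonpos (by linarith), neg_neg]

lemma pker'_eq_left {z y : ℝ} (h : y < z) : pker' (z - y) = -(1/2) * Real.exp (y - z) := by
  rw [pker', Real.sign_of_pos (by linarith), abs_of_nonneg (by linarith), neg_sub, mul_one]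

lemma pker'_eq_right {z y : ℝ} (h : z < y) : pker' (z - y) = (1/2) * Real.exp (z - y) := by
  rw [pker', Real.sign_of_neg (by linarith), abs_of_nonpos (by linarith), neg_neg]
  ring

lemma integral_Iic_split (w : ℝ → ℝ) (hw : ∀ z : ℝ, IntegrableOn w (Iic z) volume) (a z : ℝ) :
    ∫ y in Iic z, w y = (∫ y in Iic a, w y) + ∫ y in a..z, w y := by
  rcases le_total a z with hle | hle
  · rw [intervalIntegral.integral_of_le hle, ← setIntegral_union
      (by rw [Set.disjoint_left]; intro y hy hy2; exact absurd hy2.1 (not_lt.2 hy))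
      measurableSet_Ioc (hw a) ((hw z).mono_set Ioc_subset_Iic_self),
      Iic_union_Ioc_eq_Iic hle]
  · rw [intervalIntegral.integral_of_ge hle]
    have := setIntegral_union (f := w) (μ := volume)
      (by rw [Set.disjoint_left]; intro y hy hy2; exact absurd hy2.1 (not_lt.2 hy))
      measurableSet_Ioc (hw z) ((hw a).mono_set Ioc_subset_Iic_self)
    rw [Iic_union_Ioc_eq_Iic hle] at this
    linarith

lemma integral_Ioi_split (w : ℝ → ℝ) (hw : ∀ z : ℝ, IntegrableOn w (Ioi z) volume) (a z : ℝ) :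
    ∫ y in Ioi z, w y = (∫ y in Ioi a, w y) - ∫ y in a..z, w y := by
  rcases le_total a z with hle | hle
  · rw [intervalIntegral.integral_of_le hle]
    have := setIntegral_union (f := w) (μ := volume)
      (by rw [Set.disjoint_left]; intro y hy hy2; exact absurd hy2 (not_lt.2 hy.2)) -- Disjoint (Ioc a z) (Ioi z)
      measurableSet_Ioi ((hw a).mono_set Ioc_subset_Ioi_self) (hw z)
    rw [Ioc_union_Ioi_eq_Ioi hle] at this
    linarith
  · rw [intervalIntegral.integral_of_ge hle]
    have := setIntegral_union (f := w) (μ := volume)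
      (by rw [Set.disjoint_left]; intro y hy hy2; exact absurd hy2 (not_lt.2 hy.2))
      measurableSet_Ioi ((hw z).mono_set Ioc_subset_Ioi_self) (hw a)
    rw [Ioc_union_Ioi_eq_Ioi hle] at this
    linarith

lemma abs_pker'_le (x : ℝ) : |pker' x| ≤ |pker x| := by
  have h1 : |Real.sign x| ≤ 1 := by
    rcases lt_trichotomy x 0 with h | h | h
    · simp [Real.sign_of_neg h]
    · simp [h, Real.sign_zero]
    · simp [Real.sign_of_pos h]
  have h3 : (0:ℝ) < Real.exp (-|x|) := Real.exp_pos _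
  simp only [pker', pker, abs_mul, abs_neg, abs_of_nonneg h3.le]
  rw [abs_of_nonneg (by norm_num : (0:ℝ) ≤ (1:ℝ)/2)]
  nlinarith [abs_nonneg (Real.sign x)]

lemma pker_conv_hasDerivAt (f : ℝ → ℝ) (hm : AEStronglyMeasurable f volume)
    (hi : ∀ z : ℝ, Integrable (fun y => pker (z - y) * f y) volume)
    {x₀ : ℝ} (hc : ContinuousAt f x₀) :
    HasDerivAt (fun z => ∫ y, pker (z - y) * f y) (∫ y, pker' (x₀ - y) * f y) x₀ ∧
    HasDerivAt (fun z => ∫ y, pker' (z - y) * f y) ((∫ y, pker (x₀ - y) * f y) - f x₀) x₀ := by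
  set A : ℝ → ℝ := fun z => ∫ y in Iic z, Real.exp y * f y with hA_def
  set B : ℝ → ℝ := fun z => ∫ y in Ioi z, Real.exp (-y) * f y with hB_def
  have hA_int : ∀ z : ℝ, IntegrableOn (fun y => Real.exp y * f y) (Iic z) volume := by
    intro z
    have h1 : IntegrableOn (fun y => (2 * Real.exp z) * (pker (z - y) * f y)) (Iic z) volume :=
      ((hi z).restrict).const_mul _
    refine h1.congr_fun (fun y hy => ?_) measurableSet_Iic
    dsimp only
    rw [pker_eq_left (hy : y ≤ z), Real.exp_sub]
    have := (Real.exp_pos z).ne'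
    field_simp
  have hB_int : ∀ z : ℝ, IntegrableOn (fun y => Real.exp (-y) * f y) (Ioi z) volume := by
    intro z
    have h1 : IntegrableOn (fun y => (2 * Real.exp (-z)) * (pker (z - y) * f y)) (Ioi z) volume :=
      ((hi z).restrict).const_mul _
    refine h1.congr_fun (fun y hy => ?_) measurableSet_Ioi
    dsimp only
    rw [pker_eq_right (le_of_lt (hy : z < y)), Real.exp_sub, Real.exp_neg, Real.exp_neg]
    have := (Real.exp_pos z).ne'
    have := (Real.exp_pos y).ne'
    field_simp
  have hi' : ∀ z : ℝ, Integrable (fun y => pker' (z - y) * f y) volume := by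
    intro z
    refine (hi z).mono ?_ (Filter.Eventually.of_forall fun y => ?_)
    · exact ((pker'_meas.comp (measurable_const.sub measurable_id)).aestronglyMeasurable).mul hm
    · simp only [norm_mul, Real.norm_eq_abs]
      exact mul_le_mul_of_nonneg_right (abs_pker'_le _) (abs_nonneg _)
  have keyP : ∀ z : ℝ, (∫ y, pker (z - y) * f y)
      = Real.exp (-z)/2 * A z + Real.exp z/2 * B z := by
    intro z
    rw [← intervalIntegral.integral_Iic_add_Ioi (b := z) ((hi z).restrict) ((hi z).restrict)]
    congr 1
    · rw [hA_def, ← integral_const_mul]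
      refine setIntegral_congr_fun measurableSet_Iic fun y hy => ?_
      rw [pker_eq_left (hy : y ≤ z), Real.exp_sub, Real.exp_neg]
      have := (Real.exp_pos z).ne'
      field_simp
    · rw [hB_def, ← integral_const_mul]
      refine setIntegral_congr_fun measurableSet_Ioi fun y hy => ?_
      rw [pker_eq_right (le_of_lt (hy : z < y)), Real.exp_sub, Real.exp_neg]
      have := (Real.exp_pos y).ne'
      field_simp
  have hne : ∀ z : ℝ, ∀ᵐ (y : ℝ) ∂volume, y ≠ z := by
    intro z
    rw [MeasureTheory.ae_iff]
    convert Real.volume_singleton (a := z) using 2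
    ext y; simp
  have keyQ : ∀ z : ℝ, (∫ y, pker' (z - y) * f y)
      = -(Real.exp (-z)/2) * A z + Real.exp z/2 * B z := by
    intro z
    rw [← intervalIntegral.integral_Iic_add_Ioi (b := z) ((hi' z).restrict) ((hi' z).restrict)]
    congr 1
    · rw [hA_def, ← integral_const_mul]
      refine setIntegral_congr_ae measurableSet_Iic ?_
      filter_upwards [hne z] with y hy hmem
      rw [pker'_eq_left (lt_of_le_of_ne (hmem : y ≤ z) hy), Real.exp_sub, Real.exp_neg]
      have := (Real.exp_pos z).ne'
      field_simp
    · rw [hB_def, ← integral_const_mul]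
      refine setIntegral_congr_fun measurableSet_Ioi fun y hy => ?_
      rw [pker'_eq_right (hy : z < y), Real.exp_sub, Real.exp_neg]
      have := (Real.exp_pos y).ne'
      field_simp
  have hmeasA : StronglyMeasurableAtFilter (fun y => Real.exp y * f y) (𝓝 x₀) volume :=
    ⟨univ, Filter.univ_mem, (Real.continuous_exp.aestronglyMeasurable.mul hm).restrict⟩
  have hmeasB : StronglyMeasurableAtFilter (fun y => Real.exp (-y) * f y) (𝓝 x₀) volume :=
    ⟨univ, Filter.univ_mem,
      (((Real.continuous_exp.comp continuous_neg).aestronglyMeasurable).mul hm).restrict⟩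
  have hintA : IntervalIntegrable (fun y => Real.exp y * f y) volume x₀ x₀ := by
    apply MeasureTheory.IntegrableOn.intervalIntegrable
    refine (hA_int x₀).mono_set ?_
    rw [Set.uIcc_self]
    intro y hy; simp at hy; simp [hy]
  have hintB : IntervalIntegrable (fun y => Real.exp (-y) * f y) volume x₀ x₀ := by
    apply MeasureTheory.IntegrableOn.intervalIntegrable
    refine (hB_int (x₀ - 1)).mono_set ?_
    rw [Set.uIcc_self]
    intro y hy; simp at hy; simp [hy]
  have hA_d : HasDerivAt A (Real.exp x₀ * f x₀) x₀ := by
    have h := (intervalIntegral.integral_hasDerivAt_right hintA hmeasA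
      (Real.continuous_exp.continuousAt.mul hc)).const_add (A x₀)
    exact h.congr_of_eventuallyEq
      (Filter.Eventually.of_forall fun z => integral_Iic_split _ hA_int x₀ z)
  have hB_d : HasDerivAt B (-(Real.exp (-x₀) * f x₀)) x₀ := by
    have hcB : ContinuousAt (fun y => Real.exp (-y) * f y) x₀ :=
      ((Real.continuous_exp.comp continuous_neg).continuousAt).mul hc
    have h := HasDerivAt.const_sub (B x₀)
      (intervalIntegral.integral_hasDerivAt_right hintB hmeasB hcB)
    exact h.congr_of_eventuallyEq
      (Filter.Eventually.of_forall fun z => integral_Ioi_split _ hB_int x₀ z)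
  have hexp1 : HasDerivAt (fun z : ℝ => Real.exp (-z)/2) (-(Real.exp (-x₀))/2) x₀ := by
    have h := (Real.hasDerivAt_exp (-x₀)).comp x₀ ((hasDerivAt_id x₀).neg)
    simpa [neg_div] using h.div_const 2
  have hexp2 : HasDerivAt (fun z : ℝ => Real.exp z/2) (Real.exp x₀/2) x₀ :=
    (Real.hasDerivAt_exp x₀).div_const 2
  have hprod : Real.exp (-x₀) * Real.exp x₀ = 1 := by
    rw [← Real.exp_add]; simp
  constructor
  · have H := (hexp1.mul hA_d).add (hexp2.mul hB_d)
    have hfun : (fun z => ∫ y, pker (z - y) * f y)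
        = fun z => Real.exp (-z)/2 * A z + Real.exp z/2 * B z := funext keyP
    rw [hfun, keyQ x₀]
    refine H.congr_deriv (Eq.symm ?_)
    ring
  · have H := ((hexp1.neg).mul hA_d).add (hexp2.mul hB_d)
    have hfun : (fun z => ∫ y, pker' (z - y) * f y)
        = fun z => -(Real.exp (-z)/2) * A z + Real.exp z/2 * B z := funext keyQ
    rw [hfun, keyP x₀]
    refine H.congr_deriv (Eq.symm ?_)
    simp only [Pi.neg_apply]
    linear_combination (f x₀) * hprod

lemma integrable_pow_two {v : ℝ → ℝ} (h : MemLp v 2 volume) :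
    Integrable (fun y => (v y)^2) volume := by
  have h' := h.integrable_norm_rpow (by norm_num) (by norm_num)
  refine h'.congr (Filter.Eventually.of_forall fun y => ?_)
  simp only [Real.norm_eq_abs]
  rw [(by norm_num : ((2:ENNReal).toReal) = ((2:ℕ):ℝ)), Real.rpow_natCast, sq_abs]

lemma integrable_pow_four {v : ℝ → ℝ} (h : MemLp v 4 volume) :
    Integrable (fun y => (v y)^4) volume := by
  have h' := h.integrable_norm_rpow (by norm_num) (by norm_num)
  refine h'.congr (Filter.Eventually.of_forall fun y => ?_)
  simp only [Real.norm_eq_abs]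
  rw [(by norm_num : ((4:ENNReal).toReal) = ((4:ℕ):ℝ)), Real.rpow_natCast, ← abs_pow,
    abs_of_nonneg (by positivity)]

lemma integrable_cube {v : ℝ → ℝ} (h2 : MemLp v 2 volume) (h4 : MemLp v 4 volume) :
    Integrable (fun y => (v y)^3) volume := by
  refine ((integrable_pow_two h2).add (integrable_pow_four h4)).mono'
    ((h2.aestronglyMeasurable.aemeasurable.pow_const 3).aestronglyMeasurable)
    (Filter.Eventually.of_forall fun y => ?_)
  simp only [Real.norm_eq_abs, abs_pow, Pi.add_apply]
  nlinarith [sq_nonneg (|v y|^2 - |v y|), pow_nonneg (abs_nonneg (v y)) 3,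
    sq_abs (v y), pow_nonneg (abs_nonneg (v y)) 4, abs_nonneg (v y),
    sq_nonneg (v y), abs_pow (v y) 4, abs_pow (v y) 2]

lemma integrable_mul_sq {a b : ℝ → ℝ} (ha : MemLp a 2 volume) (hb : MemLp b 4 volume) :
    Integrable (fun y => a y * (b y)^2) volume := by
  refine ((integrable_pow_two ha).add (integrable_pow_four hb)).mono'
    ((ha.aestronglyMeasurable.aemeasurable.mul
      (hb.aestronglyMeasurable.aemeasurable.pow_const 2)).aestronglyMeasurable)
    (Filter.Eventually.of_forall fun y => ?_)
  simp only [Real.norm_eq_abs, abs_mul, abs_pow, sq_abs, Pi.add_apply]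
  nlinarith [sq_nonneg (|a y| - (b y)^2), sq_abs (a y), abs_nonneg (a y), sq_nonneg (b y)]

lemma pker_mul_integrable {f : ℝ → ℝ} (hf : Integrable f volume) (z : ℝ) :
    Integrable (fun y => pker (z - y) * f y) volume := by
  refine (hf.abs.const_mul (1/2)).mono'
    (((pker_cont.comp (continuous_const.sub continuous_id)).aestronglyMeasurable).mul
      hf.aestronglyMeasurable)
    (Filter.Eventually.of_forall fun y => ?_)
  simp only [Real.norm_eq_abs, abs_mul]
  have h1 := pker_le (z - y)
  have h2 : (0:ℝ) ≤ |pker (z-y)| := abs_nonneg _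
  nlinarith [abs_nonneg (f y)]

/-- The spatial derivative `u_x` of `u`. -/
def uX (u : ℝ → ℝ → ℝ) (t x : ℝ) : ℝ := deriv (u t) x

/-- `P₁ = p ∗ ((3/2) u u_x² + u³)` (convolution in the space variable). -/
def NvP1 (u : ℝ → ℝ → ℝ) (t x : ℝ) : ℝ :=
  ∫ y, pker (x - y) * ((3/2) * u t y * (uX u t y)^2 + (u t y)^3)

/-- `∂ₓP₁ = (∂ₓp) ∗ ((3/2) u u_x² + u³)`. -/
def NvdP1 (u : ℝ → ℝ → ℝ) (t x : ℝ) : ℝ :=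
  ∫ y, pker' (x - y) * ((3/2) * u t y * (uX u t y)^2 + (u t y)^3)

/-- `P₂ = (1/2) p ∗ u_x³`. -/
def NvP2 (u : ℝ → ℝ → ℝ) (t x : ℝ) : ℝ :=
  (1/2) * ∫ y, pker (x - y) * (uX u t y)^3

/-- `∂ₓP₂ = (1/2) (∂ₓp) ∗ u_x³`. -/
def NvdP2 (u : ℝ → ℝ → ℝ) (t x : ℝ) : ℝ :=
  (1/2) * ∫ y, pker' (x - y) * (uX u t y)^3

/-- `u` is a smooth solution of the Novikov equation
`u_t + u² u_x + ∂ₓP₁ + P₂ = 0` on the open set `U ⊆ ℝ × ℝ`, with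
`u(t,·) ∈ H¹(ℝ) ∩ W^{1,4}(ℝ)` for each `t` (so that `P₁` and `P₂` are defined). -/
structure NovikovSmoothSol (U : Set (ℝ × ℝ)) (u : ℝ → ℝ → ℝ) : Prop where
  open_U : IsOpen U
  smooth : ContDiffOn ℝ (⊤ : ℕ∞) (fun q : ℝ × ℝ => u q.1 q.2) U
  mem_L2 : ∀ t : ℝ, MemLp (u t) 2 volume
  mem_L2x : ∀ t : ℝ, MemLp (uX u t) 2 volume
  mem_L4 : ∀ t : ℝ, MemLp (u t) 4 volume
  mem_L4x : ∀ t : ℝ, MemLp (uX u t) 4 volume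
  eqn : ∀ t x : ℝ, (t, x) ∈ U →
    deriv (fun s => u s x) t + (u t x)^2 * uX u t x + NvdP1 u t x + NvP2 u t x = 0

/-- **The balance law for `u_x⁴`.** For a smooth solution of the Novikov equation on
an open set `U`, the identity
`∂_t(u_x⁴) + ∂_x(u²u_x⁴) = 4u³u_x³ − 4u_x³(P₁ + ∂ₓP₂)` holds pointwise on `U`. -/
theorem novikov_ux4_balance_law (U : Set (ℝ × ℝ)) (u : ℝ → ℝ → ℝ)
    (h : NovikovSmoothSol U u) :
    ∀ t x : ℝ, (t, x) ∈ U →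
      deriv (fun s => (uX u s x)^4) t + deriv (fun y => (u t y)^2 * (uX u t y)^4) x
        = 4 * (u t x)^3 * (uX u t x)^3
          - 4 * (uX u t x)^3 * (NvP1 u t x + NvdP2 u t x) := by
  intro t x htx
  obtain ⟨hUo, hsm, hL2, hL2x, hL4, hL4x, heqn⟩ := h
  set F : ℝ × ℝ → ℝ := fun q => u q.1 q.2 with hF_def
  set f' : ℝ × ℝ → (ℝ × ℝ →L[ℝ] ℝ) := fderiv ℝ F with hf'_def
  have hdiffU : ∀ q ∈ U, HasFDerivAt F (f' q) q := fun q hq =>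
    ((hsm.contDiffAt (hUo.mem_nhds hq)).differentiableAt (by simp)).hasFDerivAt
  have hx_deriv : ∀ s y : ℝ, (s, y) ∈ U → HasDerivAt (u s) (f' (s, y) (0, 1)) y := by
    intro s y hsy
    have h1 := (hdiffU _ hsy).comp_hasDerivAt y
      ((hasDerivAt_const y s).prodMk (hasDerivAt_id y))
    exact h1
  have hux_eq : ∀ s y : ℝ, (s, y) ∈ U → uX u s y = f' (s, y) (0, 1) :=
    fun s y hsy => (hx_deriv s y hsy).deriv
  have ht_deriv : ∀ s y : ℝ, (s, y) ∈ U → HasDerivAt (fun r => u r y) (f' (s, y) (1, 0)) s := by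
    intro s y hsy
    have h1 := (hdiffU _ hsy).comp_hasDerivAt s
      ((hasDerivAt_id s).prodMk (hasDerivAt_const s y))
    exact h1
  have hf'C1 : ContDiffAt ℝ 1 f' (t, x) :=
    (hsm.contDiffAt (hUo.mem_nhds htx)).fderiv_right (by norm_cast)
  set f'' := fderiv ℝ f' (t, x) with hf''_def
  have hf'd : HasFDerivAt f' f'' (t, x) := (hf'C1.differentiableAt one_ne_zero).hasFDerivAt
  have hev : ∀ᶠ q in 𝓝 (t, x), HasFDerivAt F (f' q) q := by
    filter_upwards [hUo.mem_nhds htx] with q hq using hdiffU q hq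
  have hsymm := second_derivative_symmetric_of_eventually hev hf'd
    (((1:ℝ), (0:ℝ)) : ℝ × ℝ) (((0:ℝ), (1:ℝ)) : ℝ × ℝ)
  have hmix1 : HasDerivAt (fun s => f' (s, x) (0, 1)) (f'' (1, 0) (0, 1)) t := by
    have hcurve : HasDerivAt (fun s : ℝ => (s, x)) (((1:ℝ), (0:ℝ)) : ℝ × ℝ) t :=
      (hasDerivAt_id t).prodMk (hasDerivAt_const t x)
    have h1 : HasDerivAt (fun s => f' (s, x)) (f'' (1, 0)) t := hf'd.comp_hasDerivAt t hcurve
    have h2 := (ContinuousLinearMap.apply ℝ ℝ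
      (((0:ℝ), (1:ℝ)) : ℝ × ℝ)).hasFDerivAt.comp_hasDerivAt t h1
    simpa [Function.comp_def] using h2
  have hmix2 : HasDerivAt (fun y => f' (t, y) (1, 0)) (f'' (0, 1) (1, 0)) x := by
    have hcurve : HasDerivAt (fun y : ℝ => (t, y)) (((0:ℝ), (1:ℝ)) : ℝ × ℝ) x :=
      (hasDerivAt_const x t).prodMk (hasDerivAt_id x)
    have h1 : HasDerivAt (fun y => f' (t, y)) (f'' (0, 1)) x := hf'd.comp_hasDerivAt x hcurve
    have h2 := (ContinuousLinearMap.apply ℝ ℝ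
      (((1:ℝ), (0:ℝ)) : ℝ × ℝ)).hasFDerivAt.comp_hasDerivAt x h1
    simpa [Function.comp_def] using h2
  have hUx_nhds : ∀ᶠ s in 𝓝 t, (s, x) ∈ U := by
    have hco : Continuous fun s : ℝ => (s, x) := continuous_id.prodMk continuous_const
    exact hco.continuousAt.preimage_mem_nhds (hUo.mem_nhds htx)
  have htime : HasDerivAt (fun s => uX u s x) (f'' (1, 0) (0, 1)) t := by
    refine hmix1.congr_of_eventuallyEq ?_
    filter_upwards [hUx_nhds] with s hs
    exact hux_eq s x hs
  -- the space slice
  have hVmem : {y : ℝ | (t, y) ∈ U} ∈ 𝓝 x :=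
    (continuous_const.prodMk continuous_id).continuousAt.preimage_mem_nhds (hUo.mem_nhds htx)
  obtain ⟨ε, hε, hball⟩ := Metric.mem_nhds_iff.1 hVmem
  set V := Metric.ball x ε with hV_def
  have hVo : IsOpen V := Metric.isOpen_ball
  have hxV : x ∈ V := Metric.mem_ball_self hε
  have hVsub : ∀ y ∈ V, (t, y) ∈ U := fun y hy => hball hy
  have hslice : ContDiffOn ℝ (⊤ : ℕ∞) (u t) V := by
    have hcomp : ContDiffOn ℝ (⊤ : ℕ∞) (fun y : ℝ => F (t, y)) V :=
      hsm.comp ((contDiff_const.prodMk contDiff_id).contDiffOn) (fun y hy => hVsub y hy)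
    exact hcomp
  have hux_contAt : ContinuousAt (uX u t) x :=
    (hslice.continuousOn_deriv_of_isOpen hVo (by simp)).continuousAt (hVo.mem_nhds hxV)
  have huxx : HasDerivAt (uX u t) (deriv (deriv (u t)) x) x := by
    have h2 : ContDiffOn ℝ 1 (deriv (u t)) V := hslice.deriv_of_isOpen hVo (by norm_cast)
    exact ((h2.contDiffAt (hVo.mem_nhds hxV)).differentiableAt one_ne_zero).hasDerivAt
  set uxx := deriv (deriv (u t)) x with huxx_def
  have hu_cont : ContinuousAt (u t) x := hslice.continuousOn.continuousAt (hVo.mem_nhds hxV)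
  have hud : HasDerivAt (u t) (uX u t x) x :=
    ((hslice.contDiffAt (hVo.mem_nhds hxV)).differentiableAt (by simp)).hasDerivAt
  -- convolution terms
  set f1 : ℝ → ℝ := fun y => (3/2) * u t y * (uX u t y)^2 + (u t y)^3 with hf1_def
  set g1 : ℝ → ℝ := fun y => (uX u t y)^3 with hg1_def
  have hmu := (hL2 t).aestronglyMeasurable.aemeasurable
  have hmux := (hL2x t).aestronglyMeasurable.aemeasurable
  have hmf1 : AEStronglyMeasurable f1 volume :=
    (((aemeasurable_const.mul hmu).mul (hmux.pow_const 2)).add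
      (hmu.pow_const 3)).aestronglyMeasurable
  have hmg1 : AEStronglyMeasurable g1 volume := (hmux.pow_const 3).aestronglyMeasurable
  have hif1 : Integrable f1 volume := by
    have h1 : Integrable (fun y => ((3/2) * u t y) * (uX u t y)^2) volume :=
      integrable_mul_sq ((hL2 t).const_mul _) (hL4x t)
    have h2 := integrable_cube (hL2 t) (hL4 t)
    refine (h1.add h2).congr (Filter.Eventually.of_forall fun y => ?_)
    simp [hf1_def]
  have hig1 : Integrable g1 volume := integrable_cube (hL2x t) (hL4x t)
  have hcf1 : ContinuousAt f1 x := by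
    refine ContinuousAt.add ?_ (hu_cont.pow 3)
    exact (continuousAt_const.mul hu_cont).mul (hux_contAt.pow 2)
  have hcg1 : ContinuousAt g1 x := hux_contAt.pow 3
  obtain ⟨hP1d, hQ1d⟩ := pker_conv_hasDerivAt f1 hmf1 (fun z => pker_mul_integrable hif1 z) hcf1
  obtain ⟨hP2d, hQ2d⟩ := pker_conv_hasDerivAt g1 hmg1 (fun z => pker_mul_integrable hig1 z) hcg1
  -- the x-differentiated equation
  set ψ : ℝ → ℝ := fun y => -((u t y)^2 * uX u t y + NvdP1 u t y + NvP2 u t y) with hψ_def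
  have heq_nhds : (fun y => f' (t, y) (1, 0)) =ᶠ[𝓝 x] ψ := by
    filter_upwards [hVo.mem_nhds hxV] with y hy
    have h1 := (ht_deriv t y (hVsub y hy)).deriv
    have h2 := heqn t y (hVsub y hy)
    simp only [hψ_def]
    linarith [h1, h2]
  have h_sq : HasDerivAt (fun y => (u t y)^2) (2 * u t x * uX u t x) x := by
    simpa using hud.fun_pow 2
  have hterm1 : HasDerivAt (fun y => (u t y)^2 * uX u t y)
      ((2 * u t x * uX u t x) * uX u t x + (u t x)^2 * uxx) x := h_sq.mul huxx
  have hterm2 : HasDerivAt (NvdP1 u t) (NvP1 u t x - f1 x) x := hQ1d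
  have hterm3 : HasDerivAt (NvP2 u t) (NvdP2 u t x) x := hP2d.const_mul (1/2)
  have hψd : HasDerivAt ψ
      (-(((2 * u t x * uX u t x) * uX u t x + (u t x)^2 * uxx)
        + (NvP1 u t x - f1 x) + NvdP2 u t x)) x :=
    ((hterm1.add hterm2).add hterm3).neg
  have hmixed_eq : f'' (0, 1) (1, 0)
      = -(((2 * u t x * uX u t x) * uX u t x + (u t x)^2 * uxx)
        + (NvP1 u t x - f1 x) + NvdP2 u t x) :=
    HasDerivAt.unique (hmix2.congr_of_eventuallyEq heq_nhds.symm) hψd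
  have hkey : f'' (1, 0) (0, 1)
      = -(((2 * u t x * uX u t x) * uX u t x + (u t x)^2 * uxx)
        + (NvP1 u t x - f1 x) + NvdP2 u t x) := hsymm.trans hmixed_eq
  have e1 := (htime.fun_pow 4).deriv
  have e2 := (h_sq.fun_mul (huxx.fun_pow 4)).deriv
  rw [e1, e2, hkey]
  have hf1x : f1 x = (3/2) * u t x * (uX u t x)^2 + (u t x)^3 := rfl
  rw [hf1x]
  push_cast
  ring
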